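/- arXiv:1202.1067 — 2 statements merged into one kernel-verified Lean document; each statement's English description precedes it below -/
import Mathlib

section
/- Let s ∈ ℝ and define sequences a_ℓ = -2ℓ+1 and b_ℓ = (ℓ-1)²(ℓ(ℓ-2) - s(s-2)). In an inner product space V with mutually orthogonal vectors v_ℓ (ℓ ≥ 0) satisfying ‖v_0‖ = 1, v_1 = -H v_0 for some linear operator H, and the recursion v_{ℓ+1} = a_{ℓ+1} H v_ℓ + b_{ℓ+1} v_{ℓ-1}, together with the skew-symmetry relation ⟨H v_{ℓ-1}, v_ℓ⟩ = -⟨v_{ℓ-1}, H v_ℓ⟩, one has ‖v_ℓ‖² = (1/(2ℓ+1)) · ∏_{j=1}^{ℓ} j²(j²-1 - s(s-2)) for all ℓ ≥ 0. -/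
/-!
Pair the recurrence for `v (ℓ+1)` with `v (ℓ+1)` and the one for `v (ℓ+2)` with `v ℓ`:
orthogonality kills the `v (ℓ-1)` and `v (ℓ+2)` terms, and skewness of `H` identifies the two
remaining ones, giving `a (ℓ+2) ‖v (ℓ+1)‖² = a (ℓ+1) b (ℓ+2) ‖v ℓ‖²`. For the given `a`, `b`
this says that `(2ℓ+1) ‖v ℓ‖²` gains the factor `ℓ²(ℓ²-1-s(s-2))` at each step, which telescopes.
-/

open scoped InnerProductSpace

theorem Finset.eq_mul_prod_Icc_of_succ {M : Type*} [CommMonoid M] {f c : ℕ → M}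
    (h : ∀ n, f (n + 1) = c (n + 1) * f n) (n : ℕ) :
    f n = f 0 * ∏ j ∈ Finset.Icc 1 n, c j := by
  induction n with
  | zero => simp
  | succ n ih =>
    rw [Finset.prod_Icc_succ_top (by omega), h, ih]
    ac_rfl

section ThreeTermRecurrence

variable {V : Type*} [NormedAddCommGroup V] [InnerProductSpace ℂ V]
  {H : V →ₗ[ℂ] V} {v : ℕ → V} {a b : ℕ → ℝ}

theorem mul_norm_sq_succ_of_three_term_recurrence
    (horth : ∀ i j : ℕ, i ≠ j → ⟪v i, v j⟫_ℂ = 0)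
    (hskew : ∀ i j : ℕ, ⟪H (v i), v j⟫_ℂ = -⟪v i, H (v j)⟫_ℂ)
    (hrec : ∀ ℓ : ℕ, v (ℓ + 1) = (a (ℓ + 1) : ℂ) • H (v ℓ) + (b (ℓ + 1) : ℂ) • v (ℓ - 1))
    (ℓ : ℕ) :
    a (ℓ + 2) * ‖v (ℓ + 1)‖ ^ 2 = a (ℓ + 1) * b (ℓ + 2) * ‖v ℓ‖ ^ 2 := by
  have hfirst : ⟪v (ℓ + 1), v (ℓ + 1)⟫_ℂ = a (ℓ + 1) * ⟪H (v ℓ), v (ℓ + 1)⟫_ℂ := by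
    nth_rewrite 1 [hrec ℓ]
    rw [inner_add_left, inner_smul_left, inner_smul_left, horth (ℓ - 1) (ℓ + 1) (by omega)]
    simp
  have hsecond : a (ℓ + 2) * ⟪v ℓ, H (v (ℓ + 1))⟫_ℂ = -b (ℓ + 2) * ⟪v ℓ, v ℓ⟫_ℂ := by
    rw [← inner_smul_right, eq_sub_of_add_eq (hrec (ℓ + 1)).symm, inner_sub_right,
      inner_smul_right, Nat.add_sub_cancel, horth ℓ (ℓ + 2) (by omega)]
    ring
  have hinner : (a (ℓ + 2) : ℂ) * ⟪v (ℓ + 1), v (ℓ + 1)⟫_ℂ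
      = a (ℓ + 1) * b (ℓ + 2) * ⟪v ℓ, v ℓ⟫_ℂ := by
    rw [hfirst, hskew]
    linear_combination (-(a (ℓ + 1) : ℂ)) * hsecond
  simp only [inner_self_eq_norm_sq_to_K] at hinner
  exact Complex.ofReal_injective (by push_cast; exact hinner)

end ThreeTermRecurrence

/-- Norms of the ladder vectors: ‖v_ℓ‖² = (1/(2ℓ+1))·∏_{j=1}^{ℓ} j²(j²-1-s(s-2)). -/
theorem ladder_vector_norm
    {V : Type*} [NormedAddCommGroup V] [InnerProductSpace ℂ V]
    (s : ℝ) (H : V →ₗ[ℂ] V) (v : ℕ → V)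
    (a : ℕ → ℝ) (b : ℕ → ℝ)
    (ha : ∀ l : ℕ, a l = -2*(l:ℝ)+1)
    (hb : ∀ l : ℕ, b l = ((l:ℝ)-1)^2 * ((l:ℝ)*((l:ℝ)-2) - s*(s-2)))
    (horth : ∀ i j : ℕ, i ≠ j → ⟪v i, v j⟫_ℂ = 0)
    (hnorm0 : ‖v 0‖ = 1)
    (hv1 : v 1 = -H (v 0))
    (hrec : ∀ ℓ : ℕ, 1 ≤ ℓ → v (ℓ+1) = (a (ℓ+1) : ℂ) • H (v ℓ) + (b (ℓ+1) : ℂ) • v (ℓ-1))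
    (hskew : ∀ i j : ℕ, ⟪H (v i), v j⟫_ℂ = -⟪v i, H (v j)⟫_ℂ) :
    ∀ ℓ : ℕ, ‖v ℓ‖^2
      = (1/(2*(ℓ:ℝ)+1)) * ∏ j ∈ Finset.Icc 1 ℓ, ((j:ℝ)^2 * ((j:ℝ)^2 - 1 - s*(s-2))) := by
  -- `a 1 = -1` and `b 1 = 0`, so `hv1` is the recurrence at `ℓ = 0`.
  have hrec_all : ∀ ℓ : ℕ, v (ℓ + 1) = (a (ℓ + 1) : ℂ) • H (v ℓ) + (b (ℓ + 1) : ℂ) • v (ℓ - 1)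
    | 0 => by norm_num [ha, hb, hv1]
    | ℓ + 1 => hrec (ℓ + 1) (by omega)
  have hstep (ℓ : ℕ) : (2 * ((ℓ + 1 : ℕ) : ℝ) + 1) * ‖v (ℓ + 1)‖ ^ 2
      = ((ℓ + 1 : ℕ) : ℝ) ^ 2 * (((ℓ + 1 : ℕ) : ℝ) ^ 2 - 1 - s * (s - 2))
        * ((2 * (ℓ : ℝ) + 1) * ‖v ℓ‖ ^ 2) := by
    have hnorm := mul_norm_sq_succ_of_three_term_recurrence horth hskew hrec_all ℓ
    simp only [ha, hb] at hnorm
    push_cast at hnorm ⊢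
    linear_combination -hnorm
  intro ℓ
  have hprod := Finset.eq_mul_prod_Icc_of_succ
    (f := fun n ↦ (2 * (n : ℝ) + 1) * ‖v n‖ ^ 2)
    (c := fun j ↦ (j : ℝ) ^ 2 * ((j : ℝ) ^ 2 - 1 - s * (s - 2))) hstep ℓ
  rw [one_div_mul_eq_div, eq_div_iff (by positivity), mul_comm, hprod, hnorm0]
  simp
end

section
/- Define sequences a_ℓ = -2ℓ+1 and b_ℓ = (ℓ-1)²(ℓ(ℓ-2)-s(s-2)) for a fixed real s. Suppose vectors v_ℓ in a module over an associative algebra satisfy v_ℓ = a_ℓ·H̃v_{ℓ-1} + b_ℓ·v_{ℓ-2} for some operator H̃ and all 1 ≤ ℓ ≤ L (with v_{-1}=0), and suppose additionally that H̃v_{ℓ-1} relates to the recursion via Z_ℓ v_m = v_{m+1} + (m-ℓ)H̃v_m where Z_ℓ := Z + (m-ℓ)H̃ for operators satisfying Z_ℓ H̃ = H̃Z_ℓ + λ·Id - 2C_K - D² - H̃² on the span, C v_{ℓ-1} = λ v_{ℓ-1}, C_K v_{ℓ-1} = ℓ(ℓ-1)v_{ℓ-1}, D v_{ℓ-1} =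 0, with λ = -s(2-s). Then v_{ℓ+1} := Z_ℓ v_ℓ satisfies v_{ℓ+1} = a_{ℓ+1}·H̃v_ℓ + b_{ℓ+1}·v_{ℓ-1}. -/
open Complex

/-! Applying `Z` to `v = α H w + β u` and commuting `Z` past `H` on the joint eigenvector `w`
gives `Z v = (α - 2) H v + (α μ + β) w`, where `μ = λ - 2κ` collects the eigenvalues of `C` and
`C_K`. The coefficients of the theorem satisfy exactly `a_{ℓ+1} = a_ℓ - 2` and
`b_{ℓ+1} = a_ℓ (λ - 2ℓ(ℓ-1)) + b_ℓ`. -/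

section Ladder

variable {R V : Type*} [CommRing R] [AddCommGroup V] [Module R V]

theorem apply_apply_eq_of_commutation {Z H C K D : Module.End R V}
    (hZH : Z * H = H * Z + C - (2 : R) • K - D ^ 2 - H ^ 2) {w : V} {c k : R}
    (hC : C w = c • w) (hK : K w = k • w) (hD : D w = 0) :
    Z (H w) = H (Z w) + (c - 2 * k) • w - H (H w) := by
  have h := congrArg (fun T : Module.End R V => T w) hZH
  simp only [Module.End.mul_apply, LinearMap.sub_apply, LinearMap.add_apply,
    LinearMap.smul_apply, sq, hC, hK, hD, map_zero, sub_zero] at h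
  rw [h, sub_smul, mul_smul]
  abel

theorem ladder_apply_eq {Z H : Module.End R V} {u w v : V} {α β μ : R}
    (hZH : Z (H w) = H (Z w) + μ • w - H (H w))
    (hZw : Z w = v - H w) (hZu : Z u = w - (2 : R) • H u) (hv : v = α • H w + β • u) :
    Z v = (α - 2) • H v + (α * μ + β) • w := by
  conv_lhs => rw [hv]
  rw [map_add, map_smul, map_smul, hZH, hZw, hZu, hv]
  simp only [map_add, map_sub, map_smul]
  module

end Ladder

theorem ladder_recursion_step_general {V : Type*} [AddCommGroup V] [Module ℂ V]
    (s : ℝ) (Ht D C CK Zℓ : Module.End ℂ V) (ℓ : ℕ)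
    (a b : ℕ → ℂ)
    (ha : ∀ l : ℕ, a l = -2*(l:ℂ)+1)
    (hb : ∀ l : ℕ, b l = ((l:ℂ)-1)^2 * ((l:ℂ)*((l:ℂ)-2) - (s:ℂ)*((s:ℂ)-2)))
    (vm2 vm1 vl : V)
    (hZH : Zℓ * Ht = Ht * Zℓ + C - (2:ℂ) • CK - D^2 - Ht^2)
    (hZvm1 : Zℓ vm1 = vl - Ht vm1)
    (hZvm2 : Zℓ vm2 = vm1 - (2:ℂ) • Ht vm2)
    (hC : C vm1 = (-(s:ℂ)*(2-(s:ℂ))) • vm1)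
    (hCK : CK vm1 = ((ℓ:ℂ)*((ℓ:ℂ)-1)) • vm1)
    (hD : D vm1 = 0)
    (hind : vl = a ℓ • Ht vm1 + b ℓ • vm2) :
    Zℓ vl = a (ℓ+1) • Ht vl + b (ℓ+1) • vm1 := by
  have hZHvm1 := apply_apply_eq_of_commutation hZH hC hCK hD
  rw [ladder_apply_eq hZHvm1 hZvm1 hZvm2 hind]
  congr 2
  · rw [ha, ha]
    push_cast
    ring
  · rw [ha, hb, hb]
    push_cast
    ring

/-- Inductive step of the ladder recursion: if v_ℓ = a_ℓ·H̃v_{ℓ-1} + b_ℓ·v_{ℓ-2}, then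
v_{ℓ+1} := Z_ℓ v_ℓ satisfies v_{ℓ+1} = a_{ℓ+1}·H̃v_ℓ + b_{ℓ+1}·v_{ℓ-1}, where
a_l = -2l+1, b_l = (l-1)²(l(l-2)-s(s-2)). -/
theorem ladder_recursion_step {V : Type*} [AddCommGroup V] [Module ℂ V]
    (s : ℝ) (Ht D C CK Zℓ : Module.End ℂ V) (ℓ : ℕ) (hℓ : 1 ≤ ℓ)
    (a b : ℕ → ℂ)
    (ha : ∀ l : ℕ, a l = -2*(l:ℂ)+1)
    (hb : ∀ l : ℕ, b l = ((l:ℂ)-1)^2 * ((l:ℂ)*((l:ℂ)-2) - (s:ℂ)*((s:ℂ)-2)))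
    (vm2 vm1 vl : V)
    (hZH : Zℓ * Ht = Ht * Zℓ + C - (2:ℂ) • CK - D^2 - Ht^2)
    (hZvm1 : Zℓ vm1 = vl - Ht vm1)
    (hZvm2 : Zℓ vm2 = vm1 - (2:ℂ) • Ht vm2)
    (hC : C vm1 = (-(s:ℂ)*(2-(s:ℂ))) • vm1)
    (hCK : CK vm1 = ((ℓ:ℂ)*((ℓ:ℂ)-1)) • vm1)
    (hD : D vm1 = 0)
    (hind : vl = a ℓ • Ht vm1 + b ℓ • vm2) :
    Zℓ vl = a (ℓ+1) • Ht vl + b (ℓ+1) • vm1 :=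
  ladder_recursion_step_general s Ht D C CK Zℓ ℓ a b ha hb vm2 vm1 vl hZH hZvm1 hZvm2 hC hCK hD hind
end
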